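/- arXiv:1106.4134 — 4 statements merged into one kernel-verified Lean document; each statement's English description precedes it below -/
import Mathlib

section
/- Let Y be a vector space, β_{ij} (i,j = 1,…,n) invertible linear operators on Y with β_{1j} = β_{i1} = Id for all i,j, and {E_i}_{i=1}^n, {F_i}_{i=1}^n families of finite-dimensional subspaces of Y satisfying β_{ij}(E_j) ⊆ F_i for all i,j and Σ_{i=1}^n dim F_i ≤ Σ_{i=1}^n dim E_i. Then all E_i and F_j coincide with a single subspace F, and β_{ij}(F) = F for all i,j. -/
/-- Lemma 2: if `β_{ij}` are invertible linear operators with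
`β_{1j} = β_{i1} = Id`, and `{E_i}, {F_i}` are finite-dimensional subspaces with
`β_{ij}(E_j) ⊆ F_i` and `∑ dim F_i ≤ ∑ dim E_i`, then all `E_i` and `F_j` coincide
with a single subspace `F` and `β_{ij}(F) = F`. -/
theorem stmt4 {K : Type*} [Field K] {Y : Type*} [AddCommGroup Y] [Module K Y]
    (n : ℕ) (hn : 0 < n) (β : Fin n → Fin n → (Y ≃ₗ[K] Y))
    (hβ1 : ∀ j, β ⟨0, hn⟩ j = LinearEquiv.refl K Y)
    (hβ2 : ∀ i, β i ⟨0, hn⟩ = LinearEquiv.refl K Y)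
    (E F : Fin n → Submodule K Y)
    (hEfin : ∀ i, FiniteDimensional K (E i)) (hFfin : ∀ i, FiniteDimensional K (F i))
    (hmap : ∀ i j, (E j).map (β i j : Y →ₗ[K] Y) ≤ F i)
    (hdim : ∑ i, Module.finrank K (F i) ≤ ∑ i, Module.finrank K (E i)) :
    ∃ Fs : Submodule K Y, (∀ i, E i = Fs) ∧ (∀ i, F i = Fs) ∧
      ∀ i j, Fs.map (β i j : Y →ₗ[K] Y) = Fs := by
  have key : ∀ i j, Module.finrank K (E j) ≤ Module.finrank K (F i) := by
    intro i j
    have := Submodule.finrank_mono (hmap i j)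
    rwa [(β i j).finrank_map_eq] at this
  have heq : ∀ i, Module.finrank K (F i) = Module.finrank K (E i) := by
    intro i
    have h1 : ∀ i ∈ Finset.univ, Module.finrank K (E i) ≤ Module.finrank K (F i) :=
      fun i _ => key i i
    exact ((Finset.sum_eq_sum_iff_of_le h1).1
      (le_antisymm (Finset.sum_le_sum h1) hdim) i (Finset.mem_univ i)).symm
  have hall : ∀ i j, Module.finrank K (E j) = Module.finrank K (E i) := fun i j =>
    le_antisymm ((key i j).trans (heq i).le) ((key j i).trans (heq j).le)
  set z : Fin n := ⟨0, hn⟩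
  have hE : ∀ j, E j = F z := by
    intro j
    have hle : E j ≤ F z := by
      have := hmap z j; rw [hβ1 j] at this; simpa using this
    exact Submodule.eq_of_le_of_finrank_eq hle (by rw [heq z, hall z j])
  have hF : ∀ i, F i = F z := by
    intro i
    have hle : E z ≤ F i := by
      have := hmap i z; rw [hβ2 i] at this; simpa using this
    have h1 := Submodule.eq_of_le_of_finrank_eq hle (by rw [heq i, hall i z])
    rw [← h1, hE z]
  refine ⟨F z, hE, hF, ?_⟩
  intro i j
  have hle : (F z).map (β i j : Y →ₗ[K] Y) ≤ F z := by
    have h1 : (F z).map (β i j : Y →ₗ[K] Y) ≤ F i := by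
      rw [← hE j]; exact hmap i j
    exact h1.trans (hF i).le
  exact Submodule.eq_of_le_of_finrank_eq hle ((β i j).finrank_map_eq _)
end

section
/- Let Y be a finite elementary abelian p-group and let μ̂_1,…,μ̂_n (n ≥ 2) be nonnegative-valued characteristic functions of probability distributions μ_i on the dual group, satisfying Π_{i=1}^n μ̂_i(Σ_{j=1}^n β_{ij} u_j) = Π_{i=1}^n Π_{j=1}^n μ̂_i(β_{ij} u_j) for all u_1,…,u_n ∈ Y, where β_{ij} ∈ Aut(Y) and β_{1j} = β_{i1} = Id. Then the subgroups F_{μ_i} = {y ∈ Y : μ̂_i(y) = 1} all coincide with a single subgroup F of Y, and β_{ij}(F) = F for all i,j. -/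
/-- A probability distribution on a finite set, given by its mass function. -/
def IsDist {X : Type*} [Fintype X] (μ : X → ℝ) : Prop :=
  (∀ x, 0 ≤ μ x) ∧ ∑ x, μ x = 1

/-- The characteristic function `μ̂(y) = ∑_x (x,y) μ({x})` of a distribution `μ`
on a finite abelian group `X`, where `y` is a character of `X`. -/
noncomputable def charFun {X : Type*} [AddCommGroup X] [Fintype X]
    (μ : X → ℝ) (y : AddChar X ℂ) : ℂ :=
  ∑ x, (μ x : ℂ) * y x

/-- The Haar (uniform) distribution `m_K` on a subgroup `K` of `X`. -/
noncomputable def haarDist {X : Type*} [AddCommGroup X] [Fintype X]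
    (K : AddSubgroup X) : X → ℝ :=
  (K : Set X).indicator fun _ => ((Nat.card K : ℝ))⁻¹

/-- The degenerate distribution `E_{x₀}` concentrated at `x₀`. -/
def diracDist {X : Type*} [DecidableEq X] (x₀ : X) : X → ℝ :=
  fun x => if x = x₀ then 1 else 0

/-- Convolution of two distributions on a finite abelian group. -/
noncomputable def convDist {X : Type*} [AddCommGroup X] [Fintype X]
    (μ ν : X → ℝ) : X → ℝ :=
  fun x => ∑ t, μ t * ν (x - t)

/-- `μ` is an idempotent distribution: a shift of the Haar distribution on a subgroup. -/
noncomputable def IsIdempotent {X : Type*} [AddCommGroup X] [Fintype X] [DecidableEq X]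
    (μ : X → ℝ) : Prop :=
  ∃ (K : AddSubgroup X) (x₀ : X), μ = convDist (haarDist K) (diracDist x₀)

/-- The linear forms `L_j = ∑_i A i j (ξ i)`, `j = 1,…,k`, of independent random
variables `ξ i` with distributions `μ i` are independent: the joint distribution of
`(L_1, …, L_k)` equals the product of the marginal distributions. -/
def FormsIndep {X : Type*} [AddCommGroup X] [Fintype X] [DecidableEq X] {n k : ℕ}
    (μ : Fin n → X → ℝ) (A : Fin n → Fin k → X → X) : Prop :=
  ∀ x : Fin k → X,
    (∑ t : Fin n → X, if (∀ j, ∑ i, A i j (t i) = x j) then ∏ i, μ i (t i) else 0) =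
    ∏ j, ∑ t : Fin n → X, if (∑ i, A i j (t i) = x j) then ∏ i, μ i (t i) else 0

/-- The adjoint `α̃` of an endomorphism `α` of `X`, acting on the character group:
`(α x, y) = (x, α̃ y)`. -/
noncomputable def adjChar {X : Type*} [AddCommGroup X] (α : X →+ X)
    (y : AddChar X ℂ) : AddChar X ℂ :=
  y.compAddMonoidHom α

/-!
Characters of a finite group take values on the unit circle, so `F_{μ_i}` is the subgroup of
characters trivial on the support of `μ_i`. The functional equation shows that if `∑_j β_{ij} u_j ∈ F_{μ_i}` for every `i`, then every
`β_{ij} u_j ∈ F_{μ_i}`: the left side is then `1`, and a product of numbers in `[0,1]` equal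
to `1` has all factors equal to `1`. Hence the preimage of `∏_i F_{μ_i}` under the linear map
`u ↦ (∑_j β_{ij} u_j)_i` of `Y^n` is the product of the subgroups `W_j = ⋂_i β_{ij}⁻¹ F_{μ_i}`.
Comparing indices, `∏_j [Y : W_j] ≤ ∏_i [Y : F_{μ_i}]` while `[Y : W_j] ≥ [Y : F_{μ_i}]` for
all `i, j`; so all these indices are equal and `W_j = β_{ij}⁻¹ F_{μ_i}`. Taking `j = 1`, resp.
`i = 1`, gives `F_{μ_i} = W_1` and `β_{ij}⁻¹ W_1 = W_1`.
-/

open Finset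

theorem Finset.eq_one_of_prod_eq_one_of_le_one {ι R : Type*} [CommSemiring R] [PartialOrder R]
    [IsOrderedRing R] {s : Finset ι} {f : ι → R} (h0 : ∀ i ∈ s, 0 ≤ f i)
    (h1 : ∀ i ∈ s, f i ≤ 1) (h : ∏ i ∈ s, f i = 1) {i : ι} (hi : i ∈ s) : f i = 1 := by
  classical
  refine (h1 i hi).antisymm ?_
  calc 1 = f i * ∏ j ∈ s.erase i, f j := by rw [mul_prod_erase s f hi, h]
    _ ≤ f i := mul_le_of_le_one_right (h0 i hi)
      (prod_le_one (fun j hj => h0 j (mem_of_mem_erase hj)) fun j hj => h1 j (mem_of_mem_erase hj))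

theorem Fintype.eq_of_prod_le_prod_of_le {ι R : Type*} [Fintype ι] [CommSemiring R]
    [PartialOrder R] [IsStrictOrderedRing R] {f g : ι → R} (hf : ∀ i, 0 < f i)
    (hfg : ∀ i, f i ≤ g i) (h : ∏ i, g i ≤ ∏ i, f i) (i : ι) : f i = g i :=
  (hfg i).eq_of_not_lt fun hlt =>
    h.not_gt (prod_lt_prod (fun j _ => hf j) (fun j _ => hfg j) ⟨i, mem_univ i, hlt⟩)

namespace Subgroup

variable {G G' : Type*} [Group G] [Group G']

theorem index_comap_le (H : Subgroup G) [H.FiniteIndex] (f : G' →* G) :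
    (H.comap f).index ≤ H.index := by
  rw [index_comap, ← relIndex_top_right]
  exact relIndex_le_of_le_right le_top FiniteIndex.index_ne_zero

theorem eq_of_le_of_index_le {H K : Subgroup G} [H.FiniteIndex] (hle : H ≤ K)
    (hidx : H.index ≤ K.index) : H = K :=
  hle.eq_of_not_lt fun hlt => (index_strictAnti hlt).not_ge hidx

end Subgroup

section MixingMatrix

variable {G ι : Type*} [CommGroup G] (β : ι → ι → G ≃* G) (F : ι → Subgroup G)

def columnInf (j : ι) : Subgroup G := ⨅ i, (F i).comap (β i j).toMonoidHom

theorem mem_columnInf {j : ι} {y : G} : y ∈ columnInf β F j ↔ ∀ i, β i j y ∈ F i := by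
  simp [columnInf]

variable [Fintype ι]

def mixHom : (ι → G) →* (ι → G) where
  toFun u i := ∏ j, β i j (u j)
  map_one' := by ext; simp
  map_mul' u v := by ext; simp [prod_mul_distrib]

@[simp]
theorem mixHom_apply (u : ι → G) (i : ι) : mixHom β u i = ∏ j, β i j (u j) := rfl

variable {β F}

theorem comap_mixHom_pi
    (hsplit : ∀ u : ι → G, (∀ i, ∏ j, β i j (u j) ∈ F i) → ∀ i j, β i j (u j) ∈ F i) :
    (Subgroup.pi Set.univ F).comap (mixHom β) = Subgroup.pi Set.univ (columnInf β F) := by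
  ext u
  simp only [Subgroup.mem_comap, Subgroup.mem_pi, Set.mem_univ, true_implies, mixHom_apply,
    mem_columnInf]
  exact ⟨fun hu j i => hsplit u hu i j, fun hu i => Subgroup.prod_mem _ fun j _ => hu j i⟩

theorem columnInf_eq_comap [Finite G]
    (hsplit : ∀ u : ι → G, (∀ i, ∏ j, β i j (u j) ∈ F i) → ∀ i j, β i j (u j) ∈ F i)
    (i j : ι) : columnInf β F j = (F i).comap (β i j).toMonoidHom := by
  have hle : ∀ i j, columnInf β F j ≤ (F i).comap (β i j).toMonoidHom := fun i j =>
    iInf_le (fun i => (F i).comap (β i j).toMonoidHom) i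
  have hindex_comap : ∀ i j, ((F i).comap (β i j).toMonoidHom).index = (F i).index :=
    fun i j => Subgroup.index_comap_of_surjective _ (β i j).surjective
  have hle_index : ∀ i j, (F i).index ≤ (columnInf β F j).index := fun i j =>
    hindex_comap i j ▸ Subgroup.index_antitone (hle i j)
  have hprod : ∏ j, (columnInf β F j).index ≤ ∏ i, (F i).index := by
    rw [← Subgroup.index_pi, ← Subgroup.index_pi, ← comap_mixHom_pi hsplit]
    exact Subgroup.index_comap_le _ _
  have hdiag : ∀ j, (F j).index = (columnInf β F j).index :=
    Fintype.eq_of_prod_le_prod_of_le (fun j => Nat.pos_of_ne_zero Subgroup.index_ne_zero_of_finite)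
      (fun j => hle_index j j) hprod
  refine Subgroup.eq_of_le_of_index_le (hle i j) ?_
  rw [hindex_comap, ← hdiag j, hdiag i]
  exact hle_index j i

theorem eq_and_map_eq_of_prod_mem_imp_mem (i₀ : ι) (hrow : ∀ j, β i₀ j = MulEquiv.refl G)
    (hcol : ∀ i, β i i₀ = MulEquiv.refl G) [Finite G]
    (hsplit : ∀ u : ι → G, (∀ i, ∏ j, β i j (u j) ∈ F i) → ∀ i j, β i j (u j) ∈ F i) :
    (∀ i, F i = F i₀) ∧ ∀ i j, (F i₀).map (β i j).toMonoidHom = F i₀ := by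
  have hcomap_refl : ∀ i, (F i).comap (MulEquiv.refl G).toMonoidHom = F i := fun i =>
    Subgroup.comap_id (F i)
  have hF : ∀ i, F i = columnInf β F i₀ := fun i => by
    rw [columnInf_eq_comap hsplit i i₀, hcol, hcomap_refl]
  have hFeq : ∀ i, F i = F i₀ := fun i => (hF i).trans (hF i₀).symm
  refine ⟨hFeq, fun i j => ?_⟩
  have hinv : (F i₀).comap (β i j).toMonoidHom = F i₀ := by
    rw [← hFeq i, ← columnInf_eq_comap hsplit, columnInf_eq_comap hsplit i₀, hrow, hcomap_refl,
      hFeq i]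
  simpa only [hinv] using
    Subgroup.map_comap_eq_self_of_surjective (f := (β i j).toMonoidHom) (β i j).surjective (F i₀)

end MixingMatrix

section CharFun

variable {X : Type*} [AddCommGroup X]

def charAnnihilator (S : Set X) : Subgroup (AddChar X ℂ) where
  carrier := {y | ∀ x ∈ S, y x = 1}
  one_mem' _ _ := AddChar.one_apply _
  mul_mem' ha hb x hx := by rw [AddChar.mul_apply, ha x hx, hb x hx, one_mul]
  inv_mem' ha x hx := by rw [AddChar.inv_apply', ha x hx, inv_one]

theorem Complex.eq_one_of_norm_eq_one_of_re_eq_one {z : ℂ} (hnorm : ‖z‖ = 1) (hre : z.re = 1) :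
    z = 1 :=
  Complex.ext (by simpa using hre)
    (by simpa using Complex.abs_re_eq_norm.1 (by rw [hre, hnorm, abs_one]))

variable [Fintype X] {μ : X → ℝ}

theorem norm_charFun_le_one (hμ : IsDist μ) (y : AddChar X ℂ) : ‖charFun μ y‖ ≤ 1 :=
  calc ‖charFun μ y‖ ≤ ∑ x, ‖(μ x : ℂ) * y x‖ := norm_sum_le _ _
    _ = ∑ x, μ x := sum_congr rfl fun x _ => by simp [abs_of_nonneg (hμ.1 x)]
    _ = 1 := hμ.2

open ComplexOrder in
theorem charFun_le_one (hμ : IsDist μ) {y : AddChar X ℂ} (hy : 0 ≤ charFun μ y) :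
    charFun μ y ≤ 1 := by
  rw [Complex.eq_coe_norm_of_nonneg hy, ← Complex.ofReal_one, Complex.real_le_real]
  exact norm_charFun_le_one hμ y

theorem charFun_eq_one_iff (hμ : IsDist μ) {y : AddChar X ℂ} :
    charFun μ y = 1 ↔ y ∈ charAnnihilator (Function.support μ) := by
  constructor
  · intro h x hx
    have hre_le : ∀ x, (y x).re ≤ 1 := fun x =>
      (Complex.re_le_norm _).trans (AddChar.norm_apply y x).le
    -- `1 - Re μ̂(y)` is a sum of nonnegative terms
    have hsum : ∑ x, μ x * (1 - (y x).re) = 0 := by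
      have hre := congrArg Complex.re h
      simp only [charFun, Complex.re_sum, Complex.re_ofReal_mul, Complex.one_re] at hre
      simp [mul_sub, sum_sub_distrib, hμ.2, hre]
    have hterm := (sum_eq_zero_iff_of_nonneg fun x _ =>
      mul_nonneg (hμ.1 x) (sub_nonneg.2 (hre_le x))).1 hsum x (mem_univ x)
    refine Complex.eq_one_of_norm_eq_one_of_re_eq_one (AddChar.norm_apply y x) ?_
    linarith [(mul_eq_zero.1 hterm).resolve_left hx]
  · intro h
    calc charFun μ y = ∑ x, (μ x : ℂ) := sum_congr rfl fun x _ => by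
          by_cases hx : μ x = 0
          · simp [hx]
          · rw [h x hx, mul_one]
      _ = 1 := by exact_mod_cast hμ.2

open ComplexOrder in
theorem mem_charAnnihilator_of_prod_mem {ι : Type*} [Fintype ι] {μ : ι → X → ℝ}
    (hμ : ∀ i, IsDist (μ i)) (hpos : ∀ i y, 0 ≤ charFun (μ i) y)
    {β : ι → ι → AddChar X ℂ → AddChar X ℂ}
    (heq : ∀ u : ι → AddChar X ℂ,
      ∏ i, charFun (μ i) (∏ j, β i j (u j)) = ∏ i, ∏ j, charFun (μ i) (β i j (u j)))
    (u : ι → AddChar X ℂ)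
    (hu : ∀ i, ∏ j, β i j (u j) ∈ charAnnihilator (Function.support (μ i))) (i j : ι) :
    β i j (u j) ∈ charAnnihilator (Function.support (μ i)) := by
  have hprod : ∏ ij : ι × ι, charFun (μ ij.1) (β ij.1 ij.2 (u ij.2)) = 1 := by
    rw [Fintype.prod_prod_type, ← heq u]
    exact prod_eq_one fun i _ => (charFun_eq_one_iff (hμ i)).2 (hu i)
  exact (charFun_eq_one_iff (hμ i)).1 <| eq_one_of_prod_eq_one_of_le_one
    (fun _ _ => hpos _ _) (fun _ _ => charFun_le_one (hμ _) (hpos _ _)) hprod (mem_univ (i, j))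

end CharFun

open ComplexOrder in
/-- `Y` is the character group of `X`, written multiplicatively: `∑_j β_{ij} u_j` is
`∏_j β_{ij} (u_j)`. -/
theorem stmt6 {X : Type*} [AddCommGroup X] [Fintype X]
    (n : ℕ) (hn : 2 ≤ n)
    (μ : Fin n → X → ℝ) (hμ : ∀ i, IsDist (μ i))
    (hpos : ∀ i y, 0 ≤ charFun (μ i) y)
    (β : Fin n → Fin n → (AddChar X ℂ ≃* AddChar X ℂ))
    (hβ1 : ∀ j, β ⟨0, by omega⟩ j = MulEquiv.refl _)
    (hβ2 : ∀ i, β i ⟨0, by omega⟩ = MulEquiv.refl _)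
    (heq : ∀ u : Fin n → AddChar X ℂ,
      ∏ i, charFun (μ i) (∏ j, β i j (u j)) =
      ∏ i, ∏ j, charFun (μ i) (β i j (u j))) :
    ∃ F : Subgroup (AddChar X ℂ),
      (∀ i, {y | charFun (μ i) y = 1} = (F : Set (AddChar X ℂ))) ∧
      ∀ i j, F.map (β i j).toMonoidHom = F := by
  obtain ⟨hF, hmap⟩ := eq_and_map_eq_of_prod_mem_imp_mem _ hβ1 hβ2
    (mem_charAnnihilator_of_prod_mem hμ hpos (β := fun i j => β i j) heq)
  exact ⟨_, fun i => Set.ext fun y =>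
    (charFun_eq_one_iff (hμ i)).trans (by rw [hF i, SetLike.mem_coe]), hmap⟩
end

section
/- Let X be a finite abelian group and ξ_1,…,ξ_n (n ≥ 2) independent X-valued random variables with distributions μ_1,…,μ_n. Let α_{ij} ∈ Aut(X) for i,j = 1,…,n. If the n linear forms L_j = Σ_{i=1}^n α_{ij} ξ_i, j = 1,…,n, are independent, then each μ_i is an idempotent distribution, i.e., μ_i = m_{K_i} * E_{x_i} for some subgroup K_i of X and some x_i ∈ X. -/
open Finset Function
open scoped Pointwise

section Finite

variable {α : Type*} [Fintype α]

lemma IsDist.exists_pos {p : α → ℝ} (hp : IsDist p) : ∃ a, 0 < p a := by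
  by_contra! h
  have := hp.2 ▸ sum_nonpos fun a _ => h a
  norm_num at this

lemma IsDist.sum_sq_pos {p : α → ℝ} (hp : IsDist p) : 0 < ∑ a, p a ^ 2 := by
  obtain ⟨a, ha⟩ := hp.exists_pos
  exact (pow_pos ha 2).trans_le (single_le_sum (fun a _ => sq_nonneg (p a)) (mem_univ a))

lemma sum_indicator_const (K : Set α) (c : ℝ) :
    ∑ a, K.indicator (fun _ => c) a = Nat.card K * c := by
  classical
  simp [Set.indicator_apply, sum_ite, Nat.card_eq_fintype_card, Fintype.card_subtype]

lemma sum_mul_sq_sub_sq_sum_mul {q : α → ℝ} (hq : ∑ a, q a = 1) (x : α → ℝ) :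
    ∑ a, q a * x a ^ 2 - (∑ a, q a * x a) ^ 2 =
      2⁻¹ * ∑ a, ∑ b, q a * q b * (x a - x b) ^ 2 := by
  have h : ∀ a, ∑ b, q a * q b * (x a - x b) ^ 2 =
      q a * x a ^ 2 - 2 * (q a * x a * ∑ b, q b * x b) + q a * ∑ b, q b * x b ^ 2 := by
    intro a
    calc ∑ b, q a * q b * (x a - x b) ^ 2
        = ∑ b, (q a * x a ^ 2 * q b - 2 * (q a * x a * (q b * x b))
            + q a * (q b * x b ^ 2)) := sum_congr rfl fun _ _ => by ring
      _ = _ := by simp only [sum_add_distrib, sum_sub_distrib, ← mul_sum, hq, mul_one]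
  simp only [sum_congr rfl fun a _ => h a, sum_add_distrib, sum_sub_distrib, ← mul_sum, ← sum_mul,
    hq]
  ring

lemma eq_of_forall_le_of_prod_le_prod {a b : α → ℝ} (ha : ∀ i, 0 < a i) (hb : ∀ j, 0 ≤ b j)
    (hle : ∀ i j, b j ≤ a i) (hprod : ∏ i, a i ≤ ∏ i, b i) (i j : α) : b j = a i := by
  have hdiag : ∀ k, b k = a k := by
    by_contra! ⟨k, hk⟩
    have hbpos : ∀ j, 0 < b j := fun j => (hb j).lt_of_ne' fun hbj =>
      (prod_pos fun i _ => ha i).not_ge (hprod.trans_eq (prod_eq_zero (mem_univ j) hbj))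
    exact hprod.not_gt (prod_lt_prod (fun j _ => hbpos j) (fun j _ => hle j j)
      ⟨k, mem_univ k, (hle k k).lt_of_ne hk⟩)
  exact le_antisymm (hle i j) (by simpa only [hdiag] using hle j i)

end Finite

section MapDist

variable {α Y : Type*} [Fintype α] [DecidableEq Y]

noncomputable def mapDist (p : α → ℝ) (f : α → Y) (y : Y) : ℝ :=
  ∑ a, if f a = y then p a else 0

lemma mapDist_nonneg {p : α → ℝ} (hp : ∀ a, 0 ≤ p a) (f : α → Y) (y : Y) :
    0 ≤ mapDist p f y :=
  sum_nonneg fun a _ => ite_nonneg (hp a) le_rfl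

lemma mapDist_pos {p : α → ℝ} (hp : ∀ a, 0 ≤ p a) (f : α → Y) {a : α} (ha : 0 < p a) :
    0 < mapDist p f (f a) :=
  ha.trans_le <| by
    simpa [mapDist] using single_le_sum (f := fun a' => if f a' = f a then p a' else 0)
      (fun a' _ => ite_nonneg (hp a') le_rfl) (mem_univ a)

lemma mapDist_equiv (p : α → ℝ) (e : α ≃ Y) (y : Y) : mapDist p e y = p (e.symm y) := by
  rw [mapDist, Fintype.sum_eq_single (e.symm y) fun a ha =>
    if_neg fun h => ha (e.eq_symm_apply.mpr h), if_pos (e.apply_symm_apply y)]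

lemma mapDist_comp_equiv {β : Type*} [Fintype β] (p : α → ℝ) (f : α → Y) (e : β ≃ α) :
    mapDist (p ∘ e) (f ∘ e) = mapDist p f :=
  funext fun y => e.sum_comp fun a => if f a = y then p a else 0

variable [Fintype Y]

lemma sum_mapDist (p : α → ℝ) (f : α → Y) : ∑ y, mapDist p f y = ∑ a, p a := by
  simp only [mapDist]
  rw [sum_comm]
  simp

lemma IsDist.map {p : α → ℝ} (hp : IsDist p) (f : α → Y) : IsDist (mapDist p f) :=
  ⟨mapDist_nonneg hp.1 f, (sum_mapDist p f).trans hp.2⟩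

lemma sum_sq_le_sum_sq_mapDist {p : α → ℝ} (hp : ∀ a, 0 ≤ p a) (f : α → Y) :
    ∑ a, p a ^ 2 ≤ ∑ y, mapDist p f y ^ 2 :=
  calc ∑ a, p a ^ 2 = ∑ y, ∑ a, (if f a = y then p a else 0) ^ 2 := by
        rw [sum_comm]
        simp [ite_pow]
    _ ≤ ∑ y, mapDist p f y ^ 2 :=
        sum_le_sum fun y _ => sum_sq_le_sq_sum_of_nonneg fun a _ => ite_nonneg (hp a) le_rfl

end MapDist

section PiDist

variable {ι α : Type*} [Fintype ι]

noncomputable def piDist (μ : ι → α → ℝ) (t : ι → α) : ℝ :=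
  ∏ i, μ i (t i)

lemma piDist_nonneg {μ : ι → α → ℝ} (hμ : ∀ i a, 0 ≤ μ i a) (t : ι → α) : 0 ≤ piDist μ t :=
  prod_nonneg fun i _ => hμ i (t i)

variable [DecidableEq ι]

lemma piDist_piSplitAt_symm (μ : ι → α → ℝ) (i : ι) (p : α × ({k // k ≠ i} → α)) :
    piDist μ ((Equiv.piSplitAt i fun _ => α).symm p) =
      μ i p.1 * piDist (fun k : {k // k ≠ i} => μ k) p.2 := by
  simp only [piDist]
  rw [Fintype.prod_eq_mul_prod_subtype_ne _ i]
  congr 1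
  · simp [Equiv.piSplitAt_symm_apply]
  · exact prod_congr rfl fun k _ => by simp [Equiv.piSplitAt_symm_apply, k.2]

variable [Fintype α]

lemma sum_sq_piDist (μ : ι → α → ℝ) : ∑ t, piDist μ t ^ 2 = ∏ i, ∑ a, μ i a ^ 2 := by
  simp only [piDist, ← prod_pow]
  exact (Fintype.prod_sum fun i a => μ i a ^ 2).symm

lemma IsDist.pi {μ : ι → α → ℝ} (hμ : ∀ i, IsDist (μ i)) : IsDist (piDist μ) :=
  ⟨piDist_nonneg fun i => (hμ i).1, by
    simp only [piDist]
    rw [← Fintype.prod_sum, prod_eq_one fun i _ => (hμ i).2]⟩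

end PiDist

section Periods

variable {X β : Type*} [AddCommGroup X]

def periods (f : X → β) : AddSubgroup X where
  carrier := {d | ∀ v, f (v + d) = f v}
  zero_mem' v := by rw [add_zero]
  add_mem' {a b} ha hb v := by rw [← add_assoc, hb, ha]
  neg_mem' {a} ha v := by rw [← ha (v + -a), neg_add_cancel_right]

lemma mem_periods {f : X → β} {d : X} : d ∈ periods f ↔ ∀ v, f (v + d) = f v :=
  Iff.rfl

lemma mem_periods_comp_addEquiv {Y : Type*} [AddCommGroup Y] (f : Y → β) (e : X ≃+ Y) (d : X) :
    d ∈ periods (f ∘ e) ↔ e d ∈ periods f := by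
  simp only [mem_periods, Function.comp_apply, map_add]
  exact (e.surjective.forall (p := fun y => f (y + e d) = f y)).symm

variable [Zero β]

lemma periods_subset_support_sub_support {f : X → β} {s : X} (hs : f s ≠ 0) :
    (periods f : Set X) ⊆ support f - support f :=
  fun d hd => ⟨s + d, by rwa [mem_support, hd s], s, hs, add_sub_cancel_left s d⟩

lemma support_sub_support_comp_subset_periods {Y : Type*} [AddCommGroup Y] {f : Y → β}
    (h : support f - support f ⊆ periods f) (e : X ≃+ Y) :
    support (f ∘ e) - support (f ∘ e) ⊆ periods (f ∘ e) := by
  rintro _ ⟨u, hu, u', hu', rfl⟩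
  rw [SetLike.mem_coe, mem_periods_comp_addEquiv, map_sub]
  exact h ⟨e u, hu, e u', hu', rfl⟩

end Periods

section Convolution

variable {X : Type*} [AddCommGroup X] [Fintype X]

lemma convDist_comm (μ ν : X → ℝ) : convDist μ ν = convDist ν μ :=
  funext fun x => Fintype.sum_equiv (Equiv.subLeft x) _ _ fun t => by
    simp [mul_comm]

lemma convDist_diracDist [DecidableEq X] (μ : X → ℝ) (x₀ x : X) :
    convDist μ (diracDist x₀) x = μ (x - x₀) := by
  simp [convDist, diracDist, sub_eq_iff_comm (a := x)]

lemma mapDist_prod_add [DecidableEq X] {α β : Type*} [Fintype α] [Fintype β] (p : α → ℝ)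
    (q : β → ℝ) (f : α → X) (g : β → X) :
    mapDist (fun ab : α × β => p ab.1 * q ab.2) (fun ab => f ab.1 + g ab.2) =
      convDist (mapDist p f) (mapDist q g) := by
  funext x
  simp only [mapDist, convDist, Fintype.sum_prod_type, sum_mul, mul_sum, ite_mul, zero_mul]
  conv_rhs => rw [sum_comm]; arg 2; ext b; rw [sum_comm]
  rw [sum_comm]
  refine sum_congr rfl fun b _ => sum_congr rfl fun a _ => ?_
  rw [sum_ite_eq]
  simp [← eq_sub_iff_add_eq']

lemma sum_sq_comp_addEquiv_symm (f : X → ℝ) (e : X ≃+ X) :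
    ∑ x, (f ∘ e.symm) x ^ 2 = ∑ x, f x ^ 2 :=
  e.symm.toEquiv.sum_comp fun x => f x ^ 2

lemma sum_sq_convDist_add {p : X → ℝ} (hp : ∑ x, p x = 1) (f : X → ℝ) :
    ∑ x, convDist p f x ^ 2 + 2⁻¹ * ∑ x, ∑ b, ∑ b', p b * p b' * (f (x - b) - f (x - b')) ^ 2 =
      ∑ x, f x ^ 2 := by
  have hshift : ∀ b, ∑ x, f (x - b) ^ 2 = ∑ x, f x ^ 2 := fun b =>
    Fintype.sum_equiv (Equiv.subRight b) _ _ fun _ => rfl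
  calc ∑ x, convDist p f x ^ 2 + 2⁻¹ * ∑ x, ∑ b, ∑ b', p b * p b' * (f (x - b) - f (x - b')) ^ 2
      = ∑ x, ∑ b, p b * f (x - b) ^ 2 := by
        rw [mul_sum, ← sum_add_distrib]
        refine sum_congr rfl fun x _ => ?_
        rw [← sum_mul_sq_sub_sq_sum_mul hp, convDist]
        ring
    _ = ∑ x, f x ^ 2 := by
        rw [sum_comm]
        simp only [← mul_sum, hshift, ← sum_mul, hp, one_mul]

lemma sum_sq_convDist_le {p : X → ℝ} (hp : IsDist p) (f : X → ℝ) :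
    ∑ x, convDist p f x ^ 2 ≤ ∑ x, f x ^ 2 := by
  rw [← sum_sq_convDist_add hp.2 f, le_add_iff_nonneg_right]
  exact mul_nonneg (by norm_num) <| sum_nonneg fun x _ => sum_nonneg fun b _ => sum_nonneg
    fun b' _ => mul_nonneg (mul_nonneg (hp.1 b) (hp.1 b')) (sq_nonneg _)

lemma support_sub_support_subset_periods_of_sum_sq_convDist_eq {p f : X → ℝ} (hp : IsDist p)
    (h : ∑ x, convDist p f x ^ 2 = ∑ x, f x ^ 2) : support p - support p ⊆ periods f := by
  rintro _ ⟨b, hb, b', hb', rfl⟩ v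
  have hterm : ∀ x b b', 0 ≤ p b * p b' * (f (x - b) - f (x - b')) ^ 2 := fun x b b' =>
    mul_nonneg (mul_nonneg (hp.1 b) (hp.1 b')) (sq_nonneg _)
  have hzero : ∑ x, ∑ b, ∑ b', p b * p b' * (f (x - b) - f (x - b')) ^ 2 = 0 := by
    linarith [sum_sq_convDist_add hp.2 f]
  rw [sum_eq_zero_iff_of_nonneg fun x _ => sum_nonneg fun b _ => sum_nonneg fun b' _ =>
    hterm x b b'] at hzero
  have hx := hzero (v + b) (mem_univ _)
  rw [sum_eq_zero_iff_of_nonneg fun b _ => sum_nonneg fun b' _ => hterm _ b b'] at hx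
  have hxb := hx b (mem_univ _)
  rw [sum_eq_zero_iff_of_nonneg fun b' _ => hterm _ _ b'] at hxb
  have := hxb b' (mem_univ _)
  rw [add_sub_cancel_right, mul_eq_zero, mul_eq_zero, pow_eq_zero_iff two_ne_zero, sub_eq_zero,
    add_sub_assoc] at this
  exact (this.resolve_left (not_or.2 ⟨hb, hb'⟩)).symm

lemma IsDist.isIdempotent_of_support_sub_subset_periods [DecidableEq X] {f : X → ℝ}
    (hf : IsDist f) (h : support f - support f ⊆ periods f) : IsIdempotent f := by
  obtain ⟨s, hs⟩ := hf.exists_pos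
  have hf_eq : ∀ x, f x = (periods f : Set X).indicator (fun _ => f s) (x - s) := fun x => by
    by_cases hx : x - s ∈ periods f
    · simpa [hx] using hx s
    · rw [Set.indicator_of_notMem hx]
      by_contra hfx
      exact hx (h ⟨x, hfx, s, hs.ne', rfl⟩)
  have hcard : Nat.card (periods f) * f s = 1 := by
    change (Nat.card (periods f : Set X) : ℝ) * f s = 1
    rw [← sum_indicator_const, ← hf.2]
    exact (Fintype.sum_equiv (Equiv.subRight s) _ _ hf_eq).symm
  refine ⟨periods f, s, funext fun x => ?_⟩
  rw [convDist_diracDist, haarDist, hf_eq, eq_inv_of_mul_eq_one_right hcard]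

end Convolution

section LinearForms

variable {X ι : Type*} [AddCommGroup X] [Fintype X] [DecidableEq X] [Fintype ι] [DecidableEq ι]

noncomputable def formDist (μ : ι → X → ℝ) (β : ι → X → X) : X → ℝ :=
  mapDist (piDist μ) fun t => ∑ i, β i (t i)

variable {μ : ι → X → ℝ}

lemma IsDist.formDist (hμ : ∀ i, IsDist (μ i)) (β : ι → X → X) : IsDist (formDist μ β) :=
  (IsDist.pi hμ).map _

lemma formDist_eq_convDist (μ : ι → X → ℝ) (β : ι → X ≃+ X) (i : ι) :
    formDist μ (fun k => β k) =
      convDist (formDist (fun k : {k // k ≠ i} => μ k) fun k => β k) (μ i ∘ (β i).symm) := by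
  have hsum : ∀ p : X × ({k // k ≠ i} → X), ∑ k, β k ((Equiv.piSplitAt i fun _ => X).symm p k) =
      β i p.1 + ∑ k : {k // k ≠ i}, β k (p.2 k) := by
    intro p
    rw [Fintype.sum_eq_add_sum_subtype_ne _ i]
    congr 1
    · simp [Equiv.piSplitAt_symm_apply]
    · exact sum_congr rfl fun k _ => by simp [Equiv.piSplitAt_symm_apply, k.2]
  have hmap : mapDist (μ i) (β i) = μ i ∘ (β i).symm :=
    funext (mapDist_equiv (μ i) (β i).toEquiv)
  rw [formDist, ← mapDist_comp_equiv _ _ (Equiv.piSplitAt i fun _ => X).symm, convDist_comm,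
    ← hmap, formDist, ← mapDist_prod_add]
  congr 1
  · exact funext (piDist_piSplitAt_symm μ i)
  · exact funext hsum

lemma sub_mem_support_sub_support_formDist (hμ : ∀ i, IsDist (μ i)) (β : ι → X → X) (k : ι)
    {a a' : X} (ha : μ k a ≠ 0) (ha' : μ k a' ≠ 0) :
    β k a - β k a' ∈ support (formDist μ β) - support (formDist μ β) := by
  choose w hw using fun i => (hμ i).exists_pos
  have hpos : ∀ c, μ k c ≠ 0 → 0 < piDist μ (update w k c) := fun c hc =>
    prod_pos fun m _ => by
      rcases eq_or_ne m k with rfl | hm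
      · simpa using ((hμ m).1 c).lt_of_ne' hc
      · simpa [hm] using hw m
  have hsum : ∀ c, ∑ m, β m (update w k c m) = β k c + ∑ m : {m // m ≠ k}, β m (w m) :=
    fun c => by
      rw [Fintype.sum_eq_add_sum_subtype_ne _ k, update_self]
      exact congrArg _ (sum_congr rfl fun m _ => by rw [update_of_ne m.2])
  refine ⟨_, (mapDist_pos (IsDist.pi hμ).1 (fun t => ∑ m, β m (t m)) (hpos _ ha)).ne', _,
    (mapDist_pos (IsDist.pi hμ).1 (fun t => ∑ m, β m (t m)) (hpos _ ha')).ne', ?_⟩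
  simp only [hsum, add_sub_add_right_eq_sub]

lemma sum_sq_formDist_le (hμ : ∀ i, IsDist (μ i)) (β : ι → X ≃+ X) (i : ι) :
    ∑ x, formDist μ (fun k => β k) x ^ 2 ≤ ∑ x, μ i x ^ 2 := by
  rw [formDist_eq_convDist μ β i, ← sum_sq_comp_addEquiv_symm (μ i) (β i)]
  exact sum_sq_convDist_le (IsDist.formDist (fun k : {k // k ≠ i} => hμ k) _) _

lemma support_sub_support_subset_periods_of_sum_sq_formDist_eq (hμ : ∀ i, IsDist (μ i))
    (β : ι → X ≃+ X) {i k : ι} (hki : k ≠ i)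
    (h : ∑ x, formDist μ (fun k => β k) x ^ 2 = ∑ x, μ i x ^ 2) :
    support (μ k ∘ (β k).symm) - support (μ k ∘ (β k).symm) ⊆ periods (μ i ∘ (β i).symm) := by
  rintro _ ⟨u, hu, u', hu', rfl⟩
  rw [formDist_eq_convDist μ β i, ← sum_sq_comp_addEquiv_symm (μ i) (β i)] at h
  have hdiff := sub_mem_support_sub_support_formDist (fun k : {k // k ≠ i} => hμ k)
    (fun k => β k) ⟨k, hki⟩ (a := (β k).symm u) (a' := (β k).symm u') hu hu'
  simp only [AddEquiv.apply_symm_apply] at hdiff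
  exact support_sub_support_subset_periods_of_sum_sq_convDist_eq
    (IsDist.formDist (fun k : {k // k ≠ i} => hμ k) _) h hdiff

end LinearForms

section Independence

variable {X : Type*} [AddCommGroup X] [Fintype X] [DecidableEq X] {n k : ℕ} {μ : Fin n → X → ℝ}
  {A : Fin n → Fin k → X → X}

lemma formsIndep_iff : FormsIndep μ A ↔ ∀ x, mapDist (piDist μ) (fun t j => ∑ i, A i j (t i)) x =
    ∏ j, formDist μ (fun i => A i j) (x j) := by
  simp only [FormsIndep, mapDist, formDist, piDist, funext_iff]

lemma FormsIndep.prod_sum_sq_le (h : FormsIndep μ A) (hμ : ∀ i x, 0 ≤ μ i x) :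
    ∏ i, ∑ x, μ i x ^ 2 ≤ ∏ j, ∑ x, formDist μ (fun i => A i j) x ^ 2 :=
  calc ∏ i, ∑ x, μ i x ^ 2 = ∑ t, piDist μ t ^ 2 := (sum_sq_piDist μ).symm
    _ ≤ ∑ x, mapDist (piDist μ) (fun t j => ∑ i, A i j (t i)) x ^ 2 :=
        sum_sq_le_sum_sq_mapDist (piDist_nonneg hμ) _
    _ = ∑ x : Fin k → X, ∏ j, formDist μ (fun i => A i j) (x j) ^ 2 := by
        simp only [formsIndep_iff.1 h, prod_pow]
    _ = ∏ j, ∑ x, formDist μ (fun i => A i j) x ^ 2 :=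
        (Fintype.prod_sum fun j x => formDist μ (fun i => A i j) x ^ 2).symm

end Independence

/-- Theorem 1, the main theorem: if the `n` linear forms
`L_j = ∑_i α_{ij} ξ_i` with `α_{ij} ∈ Aut(X)` of independent random variables
`ξ_1, …, ξ_n` are independent, then each `μ_i` is idempotent:
`μ_i = m_{K_i} * E_{x_i}`. -/
theorem stmt11 {X : Type*} [AddCommGroup X] [Fintype X] [DecidableEq X]
    (n : ℕ) (hn : 2 ≤ n)
    (μ : Fin n → X → ℝ) (hμ : ∀ i, IsDist (μ i))
    (α : Fin n → Fin n → (X ≃+ X))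
    (hindep : FormsIndep μ (fun i j => ⇑(α i j))) :
    ∀ i, ∃ (K : AddSubgroup X) (x₀ : X),
      μ i = convDist (haarDist K) (diracDist x₀) := by
  intro i
  have : Nontrivial (Fin n) := Fin.nontrivial_iff_two_le.2 hn
  obtain ⟨k, hki⟩ := exists_ne i
  -- any fixed column `j` of `α` works; we take `j = i`
  have hsq : ∀ m, ∑ x, formDist μ (fun m => α m i) x ^ 2 = ∑ x, μ m x ^ 2 := fun m =>
    eq_of_forall_le_of_prod_le_prod (fun m => (hμ m).sum_sq_pos)
      (fun _ => sum_nonneg fun _ _ => sq_nonneg _)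
      (fun m j => sum_sq_formDist_le hμ (fun m => α m j) m)
      (hindep.prod_sum_sq_le fun m => (hμ m).1) m i
  let ν m := μ m ∘ (α m i).symm
  have hν : ∀ a b, b ≠ a → support (ν b) - support (ν b) ⊆ periods (ν a) := fun a b hba =>
    support_sub_support_subset_periods_of_sum_sq_formDist_eq hμ (fun m => α m i) hba (hsq a)
  obtain ⟨s, hs⟩ := (hμ k).exists_pos
  have hνk : ν k (α k i s) ≠ 0 := by simpa [ν] using hs.ne'
  have hνi : support (ν i) - support (ν i) ⊆ periods (ν i) :=
    (hν k i hki.symm).trans ((periods_subset_support_sub_support hνk).trans (hν i k hki))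
  have hμν : μ i = ν i ∘ α i i := funext fun x => by simp [ν]
  have := support_sub_support_comp_subset_periods hνi (α i i)
  rw [← hμν] at this
  exact (hμ i).isIdempotent_of_support_sub_subset_periods this
end

section
/- Let n > k > 1 and let p > 2 be a prime not dividing n. Set X = (Z/p)^n. Then there exist independent X-valued random variables ξ_1,…,ξ_n with distributions μ_i that are not idempotent (μ_i ∉ I(X)), and automorphisms α_{ij} ∈ Aut(X) (i = 1,…,n, j = 1,…,k), such that the k linear forms L_j = Σ_{i=1}^n α_{ij} ξ_i, j = 1,…,k, are independent. -/
/-!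
Take for `ξ_i` the random vector with independent coordinates whose `i`-th coordinate is `0` or `1`
with probabilities `2/3` and `1/3` and whose other coordinates are uniform, and let `α_{ij}` be
multiplication by `2` if `i = j` and the identity otherwise, so that `L_j = ∑ ξ_i + ξ_j`.
The law of `ξ_i` takes two distinct nonzero values, whereas a shifted Haar distribution is
constant on its support, so it is not idempotent.
The joint law of `(ξ_1, …, ξ_n)` is invariant under translation by every family `(s_i)` with
`s_i i = 0`, and `(L_1, …, L_k)` maps these families onto `X^k`: coordinatewise this is a linear
system which, in the extreme case `k = n - 1`, can be solved because `n` is invertible mod `p`.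
Hence `(L_1, …, L_k)` is uniform on `X^k` and each `L_j` is uniform on `X`, which is independence.
-/

open Finset

theorem card_nsmul_sum_ite_eq_sum {G Y M : Type*} [AddCommGroup G] [Fintype G] [AddCommGroup Y]
    [Fintype Y] [DecidableEq Y] [AddCommMonoid M] (H : AddSubgroup G) (f : G → M)
    (hf : ∀ g, ∀ s ∈ H, f (g + s) = f g) (L : G →+ Y) (hL : ∀ y, ∃ s ∈ H, L s = y) (y : Y) :
    Fintype.card Y • ∑ g, (if L g = y then f g else 0) = ∑ g, f g := by
  have shift : ∀ y, (∑ g, if L g = y then f g else 0) = ∑ g, if L g = 0 then f g else 0 := by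
    intro y
    obtain ⟨s, hs, rfl⟩ := hL y
    rw [← Equiv.sum_comp (Equiv.addRight s)]
    refine sum_congr rfl fun g _ => ?_
    simp only [Equiv.coe_addRight, map_add, add_eq_right, hf g s hs]
  calc Fintype.card Y • ∑ g, (if L g = y then f g else 0)
      = ∑ y', ∑ g, (if L g = y' then f g else 0) := by
        simp only [shift, sum_const, card_univ]
    _ = ∑ g, f g := by
        rw [sum_comm]
        simp only [Fintype.sum_ite_eq]

theorem formsIndep_of_invariant {X : Type*} [AddCommGroup X] [Fintype X] [DecidableEq X]
    {n k : ℕ} (μ : Fin n → X → ℝ) (hμ : ∀ i, ∑ x, μ i x = 1) (A : Fin n → Fin k → X →+ X)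
    (K : Fin n → AddSubgroup X) (hK : ∀ i x, ∀ s ∈ K i, μ i (x + s) = μ i x)
    (hA : ∀ x : Fin k → X, ∃ s : Fin n → X, (∀ i, s i ∈ K i) ∧ ∀ j, ∑ i, A i j (s i) = x j) :
    FormsIndep μ (fun i j => A i j) := by
  set L : (Fin n → X) →+ (Fin k → X) :=
    AddMonoidHom.pi fun j => ∑ i, (A i j).comp (Pi.evalAddMonoidHom (fun _ => X) i)
  have hLapply : ∀ t j, L t j = ∑ i, A i j (t i) := by
    intro t j
    simp [L]
  have hinv : ∀ t, ∀ s ∈ AddSubgroup.pi Set.univ K,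
      ∏ i, μ i ((t + s) i) = ∏ i, μ i (t i) := fun t s hs =>
    prod_congr rfl fun i _ => hK i (t i) (s i) (hs i (Set.mem_univ i))
  have htotal : ∑ t : Fin n → X, ∏ i, μ i (t i) = 1 := by
    rw [← Fintype.prod_sum]
    simp [hμ]
  have hL : ∀ y, ∃ s ∈ AddSubgroup.pi Set.univ K, L s = y := fun y => by
    obtain ⟨s, hsK, hs⟩ := hA y
    exact ⟨s, fun i _ => hsK i, funext fun j => (hLapply s j).trans (hs j)⟩
  have hLj : ∀ j v, ∃ s ∈ AddSubgroup.pi Set.univ K,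
      ((Pi.evalAddMonoidHom (fun _ => X) j).comp L) s = v := fun j v => by
    obtain ⟨s, hs, hsv⟩ := hL fun _ => v
    exact ⟨s, hs, congrFun hsv j⟩
  intro x
  have joint := card_nsmul_sum_ite_eq_sum _ (fun t => ∏ i, μ i (t i)) hinv L hL x
  have marginal := fun j =>
    card_nsmul_sum_ite_eq_sum _ (fun t => ∏ i, μ i (t i)) hinv _ (hLj j) (x j)
  simp only [htotal, nsmul_eq_mul, Fintype.card_fun, Fintype.card_fin, Nat.cast_pow,
    AddMonoidHom.coe_comp, Function.comp_apply, Pi.evalAddMonoidHom_apply, hLapply, funext_iff]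
    at joint marginal
  rw [eq_inv_of_mul_eq_one_right joint,
    prod_congr rfl fun j _ => eq_inv_of_mul_eq_one_right (marginal j)]
  simp

section Solvability

variable {R ι κ : Type*} [Fintype κ]

theorem exists_sum_add_eq_of_notMem_range [DecidableEq κ] [AddCommGroup R] {e : ι → κ}
    (he : e.Injective) {m f : κ} (hf : f ∉ Set.range e) (hfm : f ≠ m) (b : ι → R) (S : R)
    (hb : ∀ j, e j = m → b j = S) :
    ∃ a : κ → R, a m = 0 ∧ ∀ j, ∑ i, a i + a (e j) = b j := by
  set a₀ : κ → R := Function.extend e (fun j => b j - S) 0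
  refine ⟨a₀ + Pi.single f (S - ∑ i, a₀ i), ?_, fun j => ?_⟩
  · rw [Pi.add_apply, Pi.single_eq_of_ne hfm.symm, add_zero]
    by_cases hm : ∃ j, e j = m
    · obtain ⟨j, rfl⟩ := hm
      simp only [a₀, he.extend_apply, hb j rfl, sub_self]
    · exact Function.extend_apply' _ _ _ hm
  · have hfj : e j ≠ f := fun h => hf ⟨j, h⟩
    simp only [Pi.add_apply, sum_add_distrib, Fintype.sum_pi_single', Pi.single_eq_of_ne hfj,
      a₀, he.extend_apply]
    abel

theorem exists_sum_add_eq_of_card_add_one_ne_zero [Fintype ι] [Field R] {e : ι → κ}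
    (he : e.Injective) {m : κ} (hm : m ∉ Set.range e) (hι : (Fintype.card ι + 1 : R) ≠ 0)
    (b : ι → R) :
    ∃ a : κ → R, a m = 0 ∧ ∀ j, ∑ i, a i + a (e j) = b j := by
  set S := (Fintype.card ι + 1 : R)⁻¹ * ∑ j, b j
  set a : κ → R := Function.extend e (fun j => b j - S) 0
  have ha : ∀ j, a (e j) = b j - S := fun j => he.extend_apply _ _ j
  have hsum : ∑ i, a i = ∑ j, b j - Fintype.card ι * S := by
    rw [← Fintype.sum_of_injective e he (fun j => b j - S) a
      (fun i hi => Function.extend_apply' _ _ _ hi) (fun j => (ha j).symm)]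
    simp [sum_sub_distrib]
  refine ⟨a, Function.extend_apply' _ _ _ hm, fun j => ?_⟩
  rw [hsum, ha]
  have hS : (Fintype.card ι + 1 : R) * S = ∑ j, b j := mul_inv_cancel_left₀ hι _
  linear_combination -hS

end Solvability

section CastLE

variable {R : Type*} [Field R] {n k : ℕ}

theorem exists_sum_add_castLE_eq (hkn : k < n) (hn : (n : R) ≠ 0) (m : Fin n) (b : Fin k → R) :
    ∃ a : Fin n → R, a m = 0 ∧ ∀ j, ∑ i, a i + a (Fin.castLE hkn.le j) = b j := by
  have he := Fin.castLE_injective hkn.le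
  by_cases hmk : (m : ℕ) < k
  · refine exists_sum_add_eq_of_notMem_range he (f := ⟨k, hkn⟩) (by simp)
      (Fin.ne_of_val_ne (by simp; omega)) b (b ⟨m, hmk⟩) fun j hj => ?_
    subst hj
    rfl
  by_cases hlast : k + 1 < n
  · obtain ⟨f, hkf, hfm⟩ : ∃ f : Fin n, k ≤ (f : ℕ) ∧ f ≠ m := by
      by_cases h : (m : ℕ) = k
      · exact ⟨⟨k + 1, hlast⟩, by simp, Fin.ne_of_val_ne (by simp; omega)⟩
      · exact ⟨⟨k, hkn⟩, le_rfl, Fin.ne_of_val_ne (by simp; omega)⟩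
    exact exists_sum_add_eq_of_notMem_range he (by simp [hkf]) hfm b 0
      fun j hj => by simp [← hj] at hmk
  · refine exists_sum_add_eq_of_card_add_one_ne_zero he (by simp [hmk]) ?_ b
    rwa [Fintype.card_fin, ← Nat.cast_succ, show k.succ = n by omega]

theorem exists_diag_eq_zero_sum_add_castLE_eq (hkn : k < n) (hn : (n : R) ≠ 0)
    (x : Fin k → Fin n → R) :
    ∃ s : Fin n → Fin n → R, (∀ i, s i i = 0) ∧ ∀ j, ∑ i, s i + s (Fin.castLE hkn.le j) = x j := by
  choose a ha₀ ha using fun m => exists_sum_add_castLE_eq hkn hn m fun j => x j m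
  exact ⟨fun i m => a m i, ha₀, fun j => funext fun m => by simpa [Finset.sum_apply] using ha m j⟩

end CastLE

theorem IsIdempotent.eq_of_ne_zero {X : Type*} [AddCommGroup X] [Fintype X] [DecidableEq X]
    {μ : X → ℝ} (h : IsIdempotent μ) {x y : X} (hx : μ x ≠ 0) (hy : μ y ≠ 0) : μ x = μ y := by
  obtain ⟨K, x₀, rfl⟩ := h
  have shift : ∀ v, convDist (haarDist K) (diracDist x₀) v = haarDist K (v - x₀) := by
    intro v
    simp only [convDist, diracDist, mul_ite, mul_one, mul_zero, sub_eq_iff_comm,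
      Fintype.sum_ite_eq]
  have haar : ∀ v, haarDist K v ≠ 0 → haarDist K v = (Nat.card K : ℝ)⁻¹ :=
    fun v hv => Set.indicator_of_mem (Set.mem_of_indicator_ne_zero hv) _
  rw [shift] at hx hy ⊢
  rw [shift, haar _ hx, haar _ hy]

section UniformExcept

variable {R : Type*} [Fintype R] {n : ℕ}

noncomputable def uniformExcept (i : Fin n) (w : R → ℝ) (x : Fin n → R) : ℝ :=
  ∏ l, if l = i then w (x l) else (Fintype.card R : ℝ)⁻¹

variable (i : Fin n) {w : R → ℝ}

theorem uniformExcept_apply (x : Fin n → R) :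
    uniformExcept i w x = w (x i) * ((Fintype.card R : ℝ)⁻¹) ^ (n - 1) := by
  unfold uniformExcept
  rw [← mul_prod_erase _ _ (mem_univ i), if_pos rfl,
    prod_congr rfl fun l hl => if_neg (ne_of_mem_erase hl), prod_const, card_erase_of_mem
      (mem_univ i), card_univ, Fintype.card_fin]

theorem isDist_uniformExcept [Nonempty R] (hw : IsDist w) : IsDist (uniformExcept i w) := by
  refine ⟨fun x => ?_, ?_⟩
  · rw [uniformExcept_apply]
    exact mul_nonneg (hw.1 _) (by positivity)
  · unfold uniformExcept
    rw [← Fintype.prod_sum fun l (z : R) => if l = i then w z else (Fintype.card R : ℝ)⁻¹]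
    refine prod_eq_one fun l _ => ?_
    split_ifs
    · exact hw.2
    · simp

theorem uniformExcept_add_of_eq_zero [AddGroup R] {s : Fin n → R} (hs : s i = 0)
    (x : Fin n → R) : uniformExcept i w (x + s) = uniformExcept i w x := by
  simp [uniformExcept_apply, hs]

theorem not_isIdempotent_uniformExcept [AddCommGroup R] [DecidableEq R] {a b : R}
    (ha : w a ≠ 0) (hb : w b ≠ 0) (hab : w a ≠ w b) : ¬ IsIdempotent (uniformExcept i w) := by
  intro h
  have hc : ((Fintype.card R : ℝ)⁻¹) ^ (n - 1) ≠ 0 := by simp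
  have := h.eq_of_ne_zero (x := fun _ => a) (y := fun _ => b)
  simp only [uniformExcept_apply] at this
  exact hab (mul_right_cancel₀ hc (this (mul_ne_zero ha hc) (mul_ne_zero hb hc)))

end UniformExcept

noncomputable def twoPointDist (R : Type*) [Zero R] [One R] [DecidableEq R] : R → ℝ :=
  fun z => 2 / 3 * diracDist 0 z + 1 / 3 * diracDist 1 z

section TwoPointDist

variable {R : Type*} [AddMonoidWithOne R] [DecidableEq R]

theorem twoPointDist_zero [NeZero (1 : R)] : twoPointDist R 0 = 2 / 3 := by
  simp [twoPointDist, diracDist]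

theorem twoPointDist_one [NeZero (1 : R)] : twoPointDist R 1 = 1 / 3 := by
  simp [twoPointDist, diracDist]

theorem isDist_twoPointDist [Fintype R] : IsDist (twoPointDist R) := by
  refine ⟨fun z => by unfold twoPointDist diracDist; split_ifs <;> norm_num, ?_⟩
  simp only [twoPointDist, diracDist, sum_add_distrib, ← mul_sum, Fintype.sum_ite_eq']
  norm_num

end TwoPointDist

theorem sum_ite_two_smul {R M ι : Type*} [Ring R] [AddCommGroup M] [Module R M] [Fintype ι]
    [DecidableEq ι] (c : ι) (s : ι → M) :
    ∑ i, (if i = c then (2 : R) else 1) • s i = ∑ i, s i + s c := by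
  have h : ∀ i, (if i = c then (2 : R) else 1) • s i = s i + if i = c then s i else 0 := by
    intro i
    split_ifs <;> simp [two_smul]
  simp only [h, sum_add_distrib, Fintype.sum_ite_eq']

theorem stmt14_general (n k p : ℕ) (hkn : k < n)
    [Fact p.Prime] (hp2 : 2 < p) (hpn : ¬ p ∣ n) :
    ∃ (μ : Fin n → (Fin n → ZMod p) → ℝ)
      (α : Fin n → Fin k → ((Fin n → ZMod p) ≃+ (Fin n → ZMod p))),
      (∀ i, IsDist (μ i)) ∧
      (∀ i, ¬ IsIdempotent (μ i)) ∧
      FormsIndep μ (fun i j => ⇑(α i j)) := by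
  have h2 : (2 : ZMod p) ≠ 0 := Ring.two_ne_zero (by rw [ZMod.ringChar_zmod_n]; omega)
  have hn : (n : ZMod p) ≠ 0 := by rwa [Ne, ZMod.natCast_eq_zero_iff]
  set c : Fin n → Fin k → ZMod p := fun i j => if i = Fin.castLE hkn.le j then 2 else 1
  have hc : ∀ i j, c i j ≠ 0 := fun i j => by
    simp only [c]
    split_ifs
    exacts [h2, one_ne_zero]
  set α := fun i j =>
    (LinearEquiv.smulOfNeZero (ZMod p) (Fin n → ZMod p) (c i j) (hc i j)).toAddEquiv
  have hμ := fun i : Fin n => isDist_uniformExcept i (isDist_twoPointDist (R := ZMod p))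
  refine ⟨fun i => uniformExcept i (twoPointDist (ZMod p)), α, hμ,
    fun i => not_isIdempotent_uniformExcept i (a := 0) (b := 1) ?_ ?_ ?_, ?_⟩
  · rw [twoPointDist_zero]; norm_num
  · rw [twoPointDist_one]; norm_num
  · rw [twoPointDist_zero, twoPointDist_one]; norm_num
  refine formsIndep_of_invariant _ (fun i => (hμ i).2) (fun i j => (α i j).toAddMonoidHom)
    (fun i => (Pi.evalAddMonoidHom _ i).ker)
    (fun i x s hs => uniformExcept_add_of_eq_zero i (AddMonoidHom.mem_ker.mp hs) x) fun x => ?_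
  obtain ⟨s, hs₀, hs⟩ := exists_diag_eq_zero_sum_add_castLE_eq hkn hn x
  exact ⟨s, hs₀, fun j => (sum_ite_two_smul (R := ZMod p) _ s).trans (hs j)⟩

/-- Theorem 2: for `n > k > 1` and a prime `p > 2` with `p ∤ n`, on
`X = (ℤ/p)^n` there exist independent random variables `ξ_i` with non-idempotent
distributions `μ_i` and automorphisms `α_{ij} ∈ Aut(X)` such that the `k` linear forms
`L_j = ∑_i α_{ij} ξ_i` are independent. -/
theorem stmt14 (n k p : ℕ) (hk : 1 < k) (hkn : k < n)
    [Fact p.Prime] (hp2 : 2 < p) (hpn : ¬ p ∣ n) :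
    ∃ (μ : Fin n → (Fin n → ZMod p) → ℝ)
      (α : Fin n → Fin k → ((Fin n → ZMod p) ≃+ (Fin n → ZMod p))),
      (∀ i, IsDist (μ i)) ∧
      (∀ i, ¬ IsIdempotent (μ i)) ∧
      FormsIndep μ (fun i j => ⇑(α i j)) :=
  stmt14_general n k p hkn hp2 hpn
end
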